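/- arXiv:2509.16278 — 3 statements merged into one kernel-verified Lean document; each statement's English description precedes it below -/
import Mathlib

section
/- Let α be the softmax of logits ℓ : Fin N → ℝ (N ≥ 2), and suppose ℓ j* > ℓ j for all j ≠ j*. With ℓ' j = δ_{j,j*}, we have Cov_α(ℓ', log α) = α j* · (log α j* - ∑_j α j log α j) > 0. -/
noncomputable def smax (N : ℕ) (ℓ : Fin N → ℝ) (j : Fin N) : ℝ :=
  Real.exp (ℓ j) / ∑ k, Real.exp (ℓ k)

noncomputable def covD (N : ℕ) (α f g : Fin N → ℝ) : ℝ :=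
  (∑ j, α j * f j * g j) - (∑ j, α j * f j) * (∑ j, α j * g j)

theorem cov_indicator_log_pos (N : ℕ) (hN : 2 ≤ N) (ℓ : Fin N → ℝ) (jstar : Fin N)
    (hmax : ∀ j, j ≠ jstar → ℓ j < ℓ jstar) :
    covD N (smax N ℓ) (fun j => if j = jstar then 1 else 0)
        (fun j => Real.log (smax N ℓ j)) =
      smax N ℓ jstar *
        (Real.log (smax N ℓ jstar) - ∑ j, smax N ℓ j * Real.log (smax N ℓ j)) ∧
    0 < covD N (smax N ℓ) (fun j => if j = jstar then 1 else 0)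
        (fun j => Real.log (smax N ℓ j)) := by
  have hNpos : 0 < N := by omega
  have hS : 0 < ∑ k, Real.exp (ℓ k) := by
    apply Finset.sum_pos (fun k _ => Real.exp_pos _)
    exact Finset.univ_nonempty_iff.mpr ⟨⟨0, hNpos⟩⟩
  have hpos : ∀ j, 0 < smax N ℓ j := fun j => div_pos (Real.exp_pos _) hS
  have hsum1 : ∑ j, smax N ℓ j = 1 := by
    simp only [smax, ← Finset.sum_div]
    exact div_self hS.ne'
  have hlt : ∀ j, j ≠ jstar → smax N ℓ j < smax N ℓ jstar := by
    intro j hj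
    exact div_lt_div_of_pos_right (Real.exp_lt_exp.mpr (hmax j hj)) hS
  -- the equation
  have heq : covD N (smax N ℓ) (fun j => if j = jstar then 1 else 0)
      (fun j => Real.log (smax N ℓ j)) =
      smax N ℓ jstar *
        (Real.log (smax N ℓ jstar) - ∑ j, smax N ℓ j * Real.log (smax N ℓ j)) := by
    unfold covD
    have h1 : (∑ j, smax N ℓ j * (if j = jstar then (1:ℝ) else 0) * Real.log (smax N ℓ j))
        = smax N ℓ jstar * Real.log (smax N ℓ jstar) := by
      rw [Finset.sum_eq_single jstar]
      · simp
      · intro b _ hb; simp [hb]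
      · simp
    have h2 : (∑ j, smax N ℓ j * (if j = jstar then (1:ℝ) else 0)) = smax N ℓ jstar := by
      rw [Finset.sum_eq_single jstar]
      · simp
      · intro b _ hb; simp [hb]
      · simp
    rw [h1, h2]; ring
  refine ⟨heq, ?_⟩
  rw [heq]
  apply mul_pos (hpos jstar)
  rw [sub_pos]
  have key : ∑ j, smax N ℓ j * Real.log (smax N ℓ j)
      < ∑ j, smax N ℓ j * Real.log (smax N ℓ jstar) := by
    obtain ⟨j0, hj0⟩ : ∃ j0 : Fin N, j0 ≠ jstar := by
      by_contra h
      push_neg at h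
      have : Fintype.card (Fin N) ≤ 1 := Fintype.card_le_one_iff.mpr (fun a b => (h a).trans (h b).symm)
      simp at this; omega
    apply Finset.sum_lt_sum
    · intro i _
      rcases eq_or_ne i jstar with rfl | hi
      · exact le_refl _
      · exact le_of_lt (mul_lt_mul_of_pos_left
          (Real.log_lt_log (hpos i) (hlt i hi)) (hpos i))
    · exact ⟨j0, Finset.mem_univ _, mul_lt_mul_of_pos_left
        (Real.log_lt_log (hpos j0) (hlt j0 hj0)) (hpos j0)⟩
  calc ∑ j, smax N ℓ j * Real.log (smax N ℓ j)
      < ∑ j, smax N ℓ j * Real.log (smax N ℓ jstar) := key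
    _ = Real.log (smax N ℓ jstar) := by
        rw [← Finset.sum_mul, hsum1, one_mul]
end

section
/- Let ℓ : Fin N → ℝ (N ≥ 2) have a strict maximizer at j*: ℓ j* > ℓ j for all j ≠ j*. Define H(t) as the Shannon entropy of the softmax of ℓ + t·e_{j*}, where e_{j*} is the indicator of j*. Then H'(t) < 0 for all t ≥ 0; consequently for any Δ > 0, H(Δ) < H(0). -/
open Real Finset

/-! The entropy of a softmax is `log Z - E[u]`, the log-partition function minus the expected
logit. Boosting the logit `x` of the argmax while the other logits stay fixed, this is a function
of `x` alone, whose derivative is `-p (x - E[u])` with `p` the probability of the argmax. It is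
negative as soon as `x` exceeds the mean logit, which the strict argmax does. -/

theorem neg_sum_smax_mul_log_smax (N : ℕ) (u : Fin N → ℝ) :
    -∑ j, smax N u j * log (smax N u j) =
      log (∑ k, exp (u k)) - (∑ k, u k * exp (u k)) / ∑ k, exp (u k) := by
  set Z := ∑ k, exp (u k)
  have hterm : ∀ j,
      smax N u j * log (smax N u j) = u j * exp (u j) / Z - log Z * exp (u j) / Z := by
    intro j
    have hZ : 0 < Z := sum_pos (fun k _ => exp_pos (u k)) ⟨j, mem_univ j⟩
    rw [smax, log_div (exp_ne_zero _) hZ.ne', log_exp]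
    ring
  rw [sum_congr rfl fun j _ => hterm j, sum_sub_distrib, ← sum_div, ← sum_div, ← mul_sum]
  rcases eq_or_ne Z 0 with hZ | hZ
  · simp [hZ]
  · field_simp
    ring

/-- The entropy of a softmax whose logits are `x` and a fixed family `v` with
`S = ∑ exp v` and `C = ∑ v * exp v`. -/
noncomputable def entropyOneVsRest (S C x : ℝ) : ℝ :=
  log (exp x + S) - (x * exp x + C) / (exp x + S)

theorem neg_sum_smax_boost_mul_log (N : ℕ) (ℓ : Fin N → ℝ) (jstar : Fin N) (s : ℝ) :
    -∑ j, smax N (fun i => ℓ i + if i = jstar then s else 0) j *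
        log (smax N (fun i => ℓ i + if i = jstar then s else 0) j) =
      entropyOneVsRest (∑ j ∈ {jstar}ᶜ, exp (ℓ j)) (∑ j ∈ {jstar}ᶜ, ℓ j * exp (ℓ j))
        (ℓ jstar + s) := by
  have hsplit : ∀ f : ℝ → ℝ, ∑ k, f (ℓ k + if k = jstar then s else 0) =
      f (ℓ jstar + s) + ∑ k ∈ {jstar}ᶜ, f (ℓ k) := by
    intro f
    rw [Fintype.sum_eq_add_sum_compl jstar, if_pos rfl]
    congr 1
    refine sum_congr rfl fun k hk => ?_
    rw [if_neg (by simpa using hk), add_zero]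
  rw [neg_sum_smax_mul_log_smax, hsplit exp, hsplit (fun x => x * exp x), entropyOneVsRest]

section OneVsRest

variable {S C : ℝ}

theorem hasDerivAt_entropyOneVsRest (hS : 0 < S) (x : ℝ) :
    HasDerivAt (entropyOneVsRest S C) (exp x / (exp x + S) ^ 2 * (C - x * S)) x := by
  have hZ : exp x + S ≠ 0 := by positivity
  have hlog := ((hasDerivAt_exp x).add_const S).log hZ
  have hmean := (((hasDerivAt_id x).mul (hasDerivAt_exp x)).add_const C).div
    ((hasDerivAt_exp x).add_const S) hZ
  refine (hlog.sub hmean).congr_deriv ?_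
  simp only [id, Pi.mul_apply]
  field_simp
  ring

theorem deriv_entropyOneVsRest_neg (hS : 0 < S) {x : ℝ} (hx : C < x * S) :
    deriv (entropyOneVsRest S C) x < 0 := by
  rw [(hasDerivAt_entropyOneVsRest hS x).deriv]
  exact mul_neg_of_pos_of_neg (by positivity) (by linarith)

theorem strictAntiOn_entropyOneVsRest (hS : 0 < S) {a : ℝ} (ha : C < a * S) :
    StrictAntiOn (entropyOneVsRest S C) (Set.Ici a) := by
  refine strictAntiOn_of_deriv_neg (convex_Ici a)
    (fun x _ => (hasDerivAt_entropyOneVsRest hS x).continuousAt.continuousWithinAt) ?_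
  intro x hx
  rw [interior_Ici] at hx
  exact deriv_entropyOneVsRest_neg hS
    (ha.trans_le (mul_le_mul_of_nonneg_right (le_of_lt hx) hS.le))

end OneVsRest

theorem boosting_argmax_decreases_entropy (N : ℕ) (hN : 2 ≤ N) (ℓ : Fin N → ℝ)
    (jstar : Fin N) (hmax : ∀ j, j ≠ jstar → ℓ j < ℓ jstar) :
    (∀ t : ℝ, 0 ≤ t →
      deriv (fun s : ℝ =>
        -∑ j, smax N (fun i => ℓ i + if i = jstar then s else 0) j *
            Real.log (smax N (fun i => ℓ i + if i = jstar then s else 0) j)) t < 0) ∧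
    ∀ Δ : ℝ, 0 < Δ →
      (-∑ j, smax N (fun i => ℓ i + if i = jstar then Δ else 0) j *
          Real.log (smax N (fun i => ℓ i + if i = jstar then Δ else 0) j)) <
      (-∑ j, smax N ℓ j * Real.log (smax N ℓ j)) := by
  set S := ∑ j ∈ {jstar}ᶜ, exp (ℓ j)
  set C := ∑ j ∈ {jstar}ᶜ, ℓ j * exp (ℓ j)
  have hrest : ({jstar}ᶜ : Finset (Fin N)).Nonempty := by
    obtain ⟨j, hj⟩ :=
      Fintype.exists_ne_of_one_lt_card (by simpa using one_lt_two.trans_le hN) jstar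
    exact ⟨j, by simpa using hj⟩
  have hS : 0 < S := sum_pos (fun j _ => exp_pos (ℓ j)) hrest
  have hC : C < ℓ jstar * S := by
    rw [mul_sum]
    refine sum_lt_sum_of_nonempty hrest fun j hj => ?_
    exact mul_lt_mul_of_pos_right (hmax j (by simpa using hj)) (exp_pos (ℓ j))
  simp only [neg_sum_smax_boost_mul_log]
  refine ⟨fun t ht => ?_, fun Δ hΔ => ?_⟩
  · rw [deriv_comp_const_add]
    exact deriv_entropyOneVsRest_neg hS (hC.trans_le (by nlinarith))
  · have h0 := neg_sum_smax_boost_mul_log N ℓ jstar 0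
    simp only [add_zero, ite_self] at h0
    rw [h0]
    exact strictAntiOn_entropyOneVsRest hS hC (by simp) (by simp [hΔ.le]) (by linarith)
end

section
/- Let α be the softmax of logits ℓ : Fin N → ℝ where ℓ j* ≥ ℓ j + Δ for all j ≠ j*, Δ > 0, N ≥ 2. Then the Shannon entropy satisfies H(α) ≤ -p log p - (1-p) log(1-p) + (1-p) log(N-1), where p = 1/(1 + (N-1) exp(-Δ)). -/
open Real Finset

section Entropy

variable {ι : Type*} [Fintype ι]

lemma mul_log_sub_mul_log_le_sub {a q : ℝ} (ha : 0 ≤ a) (hq : 0 < q) :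
    a * log q - a * log a ≤ q - a := by
  rcases ha.eq_or_lt with rfl | ha
  · simpa using hq.le
  have h := log_le_sub_one_of_pos (div_pos hq ha)
  rw [log_div hq.ne' ha.ne'] at h
  calc a * log q - a * log a = a * (log q - log a) := by ring
    _ ≤ a * (q / a - 1) := mul_le_mul_of_nonneg_left h ha.le
    _ = q - a := by field_simp

/-- Gibbs' inequality. -/
theorem sum_mul_log_le_sum_mul_log_self {a q : ι → ℝ} (ha : ∀ i, 0 ≤ a i) (hq : ∀ i, 0 < q i)
    (hsum : ∑ i, q i ≤ ∑ i, a i) :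
    ∑ i, a i * log (q i) ≤ ∑ i, a i * log (a i) := by
  have h := Finset.sum_le_sum fun i (_ : i ∈ univ) => mul_log_sub_mul_log_le_sub (ha i) (hq i)
  rw [Finset.sum_sub_distrib, Finset.sum_sub_distrib] at h
  linarith

variable [DecidableEq ι]

lemma sum_ite_eq_add_card_sub_one_mul (i₀ : ι) (p r : ℝ) :
    ∑ i, (if i = i₀ then p else r) = p + (Fintype.card ι - 1) * r := by
  rw [Fintype.sum_eq_add_sum_compl i₀, if_pos rfl,
    Finset.sum_congr rfl fun i hi => if_neg (by simpa using hi), sum_const, card_compl,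
    card_singleton, nsmul_eq_mul, Nat.cast_sub (Fintype.card_pos_iff.mpr ⟨i₀⟩), Nat.cast_one]

lemma sum_mul_log_ite (a : ι → ℝ) (i₀ : ι) (p r : ℝ) :
    ∑ i, a i * log (if i = i₀ then p else r) = a i₀ * log p + (∑ i, a i - a i₀) * log r := by
  rw [Fintype.sum_eq_add_sum_compl i₀, Fintype.sum_eq_add_sum_compl i₀ a, if_pos rfl,
    add_sub_cancel_left, Finset.sum_mul]
  congr 1
  exact Finset.sum_congr rfl fun i hi => by rw [if_neg (by simpa using hi)]

theorem neg_sum_mul_log_le_of_le_apply {a : ι → ℝ} (ha : ∀ i, 0 ≤ a i) (ha1 : ∑ i, a i = 1)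
    {i₀ : ι} {p : ℝ} (hnp : 1 ≤ Fintype.card ι * p) (hp1 : p < 1) (hpa : p ≤ a i₀) :
    -∑ i, a i * log (a i) ≤
      -p * log p - (1 - p) * log (1 - p) + (1 - p) * log (Fintype.card ι - 1) := by
  set n : ℝ := (Fintype.card ι : ℝ)
  have hn0 : 0 < n := by simpa [n] using Fintype.card_pos_iff.mpr ⟨i₀⟩
  have hn1 : 0 < n - 1 := by nlinarith
  have hp0 : 0 < p := by nlinarith
  set r := (1 - p) / (n - 1)
  have hr0 : 0 < r := div_pos (by linarith) hn1
  have hrp : r ≤ p := by rw [div_le_iff₀ hn1]; linarith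
  have hq1 : ∑ i, (if i = i₀ then p else r) = 1 := by
    rw [sum_ite_eq_add_card_sub_one_mul]
    change p + (n - 1) * ((1 - p) / (n - 1)) = 1
    rw [mul_div_cancel₀ _ hn1.ne']
    ring
  have gibbs := sum_mul_log_le_sum_mul_log_self ha (fun i => by split_ifs <;> assumption)
    (hq1.trans ha1.symm).le
  rw [sum_mul_log_ite, ha1] at gibbs
  have hlog : log r = log (1 - p) - log (n - 1) := log_div (by linarith) hn1.ne'
  have hmono := mul_nonneg (sub_nonneg.mpr hpa) (sub_nonneg.mpr (log_le_log hr0 hrp))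
  linear_combination gibbs + hmono - (1 - p) * hlog

end Entropy

lemma sum_exp_pos {ι : Type*} [Fintype ι] (f : ι → ℝ) (i : ι) : 0 < ∑ k, exp (f k) :=
  Finset.sum_pos (fun k _ => exp_pos (f k)) ⟨i, mem_univ i⟩

lemma smax_pos {N : ℕ} (ℓ : Fin N → ℝ) (j : Fin N) : 0 < smax N ℓ j :=
  div_pos (exp_pos _) (sum_exp_pos ℓ j)

lemma sum_smax {N : ℕ} (ℓ : Fin N → ℝ) (j₀ : Fin N) : ∑ j, smax N ℓ j = 1 := by
  simp only [smax, ← Finset.sum_div]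
  exact div_self (sum_exp_pos ℓ j₀).ne'

lemma one_div_le_smax_of_margin {N : ℕ} (ℓ : Fin N → ℝ) (jstar : Fin N) (Δ : ℝ)
    (hmargin : ∀ j, j ≠ jstar → ℓ j + Δ ≤ ℓ jstar) :
    1 / (1 + ((N : ℝ) - 1) * exp (-Δ)) ≤ smax N ℓ jstar := by
  have hrest : ∀ j ∈ ({jstar}ᶜ : Finset (Fin N)), exp (ℓ j) ≤ exp (ℓ jstar) * exp (-Δ) := by
    intro j hj
    rw [← exp_add, exp_le_exp]
    linarith [hmargin j (by simpa using hj)]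
  have hsum := Finset.sum_le_card_nsmul _ _ _ hrest
  rw [card_compl, card_singleton, Fintype.card_fin, nsmul_eq_mul, Nat.cast_sub (Fin.pos jstar),
    Nat.cast_one] at hsum
  have hN : (1 : ℝ) ≤ N := by exact_mod_cast Fin.pos jstar
  have hD : 0 < 1 + ((N : ℝ) - 1) * exp (-Δ) :=
    add_pos_of_pos_of_nonneg one_pos (mul_nonneg (sub_nonneg.mpr hN) (exp_pos _).le)
  rw [smax, div_le_div_iff₀ hD (sum_exp_pos ℓ jstar),
    one_mul, Fintype.sum_eq_add_sum_compl jstar]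
  linarith

theorem entropy_upper_bound_of_margin (N : ℕ) (hN : 2 ≤ N) (ℓ : Fin N → ℝ)
    (jstar : Fin N) (Δ : ℝ) (hΔ : 0 < Δ)
    (hmargin : ∀ j, j ≠ jstar → ℓ j + Δ ≤ ℓ jstar) :
    (-∑ j, smax N ℓ j * Real.log (smax N ℓ j)) ≤
      -(1 / (1 + ((N : ℝ) - 1) * Real.exp (-Δ))) *
          Real.log (1 / (1 + ((N : ℝ) - 1) * Real.exp (-Δ))) -
        (1 - 1 / (1 + ((N : ℝ) - 1) * Real.exp (-Δ))) *
          Real.log (1 - 1 / (1 + ((N : ℝ) - 1) * Real.exp (-Δ))) +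
        (1 - 1 / (1 + ((N : ℝ) - 1) * Real.exp (-Δ))) * Real.log ((N : ℝ) - 1) := by
  have hN1 : (1 : ℝ) < N := by exact_mod_cast hN
  have hexp0 : 0 < exp (-Δ) := exp_pos _
  have hexp1 : exp (-Δ) < 1 := exp_lt_one_iff.mpr (neg_neg_of_pos hΔ)
  have hD : 0 < 1 + ((N : ℝ) - 1) * exp (-Δ) := by positivity
  have hp1 : 1 / (1 + ((N : ℝ) - 1) * exp (-Δ)) < 1 := by
    rw [div_lt_one hD]; nlinarith
  have hNp : 1 ≤ (N : ℝ) * (1 / (1 + ((N : ℝ) - 1) * exp (-Δ))) := by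
    rw [mul_one_div, le_div_iff₀ hD]; nlinarith
  simpa using neg_sum_mul_log_le_of_le_apply (fun j => (smax_pos ℓ j).le) (sum_smax ℓ jstar)
    (by simpa using hNp) hp1 (one_div_le_smax_of_margin ℓ jstar Δ hmargin)
end
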